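/- Let m ≥ 2, α > 0, and let Q : (0,∞) → ℝ be a positive non-decreasing function with Q(t) = o(t²) as t → +∞ and liminf_{r→+∞} Q(r)·(log r)/r² < +∞. Let b : ℝ^m → ℝ be continuous with b(x) ≥ 1/Q(|x|) for |x| > 0, and let f : ℝ → ℝ be continuous. Suppose u ∈ C²(ℝ^m) satisfies u* := sup u < +∞ and div(∇u/(1+|∇u|²)^α)(x) ≥ b(x) f(u(x)) for every x in the set Ω_γ = {x ∈ ℝ^m : u(x) > γ}, for some γ < u*. Then f(u*) ≤ 0. -/

import Mathlib

open Filter Asymptotics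

/-- The divergence of a vector field on Euclidean space. -/
noncomputable def euclideanDiv {m : ℕ}
    (X : EuclideanSpace ℝ (Fin m) → EuclideanSpace ℝ (Fin m))
    (x : EuclideanSpace ℝ (Fin m)) : ℝ :=
  ∑ i, fderiv ℝ (fun y => X y i) x (EuclideanSpace.single i 1)

/-- The generalized mean curvature operator on Euclidean space: the divergence of the
vector field `∇u / (1 + |∇u|²)^α`. -/
noncomputable def meanCurvatureOp {m : ℕ} (α : ℝ) (u : EuclideanSpace ℝ (Fin m) → ℝ)
    (x : EuclideanSpace ℝ (Fin m)) : ℝ :=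
  euclideanDiv (fun y => ((1 + ‖gradient u y‖ ^ 2) ^ α)⁻¹ • gradient u y) x

/-!
Suppose `f (sup u) > 0`. For small `ε > 0` the function `u - ε log (1 + ‖x‖²)` tends to `-∞` at
infinity, so it attains its maximum at some `x`, where `u x` is so close to `sup u` that
`f (u x) > f (sup u) / 2`. At `x`, `‖∇u‖ ≤ ε` and `D²u ≤ 2ε / (1 + ‖x‖²)` as quadratic forms.
The mean curvature operator at `x` is the trace of `D²u` against `c I - β ∇u ⊗ ∇u` with
`c = (1 + ‖∇u‖²)^(-α)` and `β = 2α (1 + ‖∇u‖²)^(-α-1)`; for `‖∇u‖` small this matrix is positive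
semidefinite with trace at most `m`, so the operator is at most `2mε / (1 + ‖x‖²)`. On the other
hand `Q = O(t²)` gives `b x ≥ c' / (1 + ‖x‖²)` for some `c' > 0`, and the differential inequality
at `x` yields `c' f (sup u) / 2 ≤ 2mε`, which fails for small `ε`.
-/

open Topology
open scoped RealInnerProductSpace

section LinearAlgebra

variable {E : Type*} [NormedAddCommGroup E] [InnerProductSpace ℝ E]
  {ι : Type*} [Fintype ι] (b : OrthonormalBasis ι ℝ E)

theorem OrthonormalBasis.sum_inner_mul_apply {F : Type*} [FunLike F E ℝ] [LinearMapClass F ℝ E ℝ]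
    (ℓ : F) (p : E) : ∑ i, ⟪b i, p⟫ * ℓ (b i) = ℓ p := by
  conv_rhs => rw [← b.sum_repr' p]
  simp [map_sum, map_smul]

theorem OrthonormalBasis.inner_sum_apply_smul (ℓ : E →L[ℝ] ℝ) (v : E) :
    ⟪v, ∑ i, ℓ (b i) • b i⟫ = ℓ v := by
  simp only [inner_sum, inner_smul_right, mul_comm (ℓ _), real_inner_comm (b _) v]
  exact b.sum_inner_mul_apply ℓ v

theorem OrthonormalBasis.norm_sq_mul_sum_apply_le {B : LinearMap.BilinForm ℝ E}
    (hB : ∀ v, B v v ≤ 0) (p : E) : ‖p‖ ^ 2 * ∑ i, B (b i) (b i) ≤ B p p := by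
  rcases eq_or_ne p 0 with rfl | hp
  · simp
  set N := ‖p‖ ^ 2
  -- Sum `B` over the projections of the `b i` onto `p⟂`, scaled by `N`.
  have hexpand : ∀ i, B (N • b i - ⟪b i, p⟫ • p) (N • b i - ⟪b i, p⟫ • p)
      = N * (N * B (b i) (b i)) - N * (⟪b i, p⟫ * B (b i) p)
        - N * (⟪b i, p⟫ * B p (b i)) + ⟪b i, p⟫ ^ 2 * B p p := fun i => by
    simp only [map_sub, map_smul, LinearMap.sub_apply, LinearMap.smul_apply, smul_eq_mul]
    ring
  have hsum : ∑ i, B (N • b i - ⟪b i, p⟫ • p) (N • b i - ⟪b i, p⟫ • p)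
      = N * (N * ∑ i, B (b i) (b i) - B p p) := by
    have hleft : ∑ i, ⟪b i, p⟫ * B (b i) p = B p p := b.sum_inner_mul_apply (LinearMap.flip B p) p
    simp only [hexpand, Finset.sum_add_distrib, Finset.sum_sub_distrib, ← Finset.mul_sum,
      ← Finset.sum_mul, hleft, b.sum_inner_mul_apply (B p), b.sum_sq_inner_right]
    ring
  have hN : 0 < N := by positivity
  have hnonpos := Finset.sum_nonpos fun i (_ : i ∈ Finset.univ) =>
    hB (N • b i - ⟪b i, p⟫ • p)
  rw [hsum] at hnonpos
  nlinarith

theorem OrthonormalBasis.mul_sum_apply_sub_mul_apply_le {B : LinearMap.BilinForm ℝ E}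
    {M c β : ℝ} (hB : ∀ v, B v v ≤ M * ‖v‖ ^ 2) (p : E) (hβ : 0 ≤ β) (hc : β * ‖p‖ ^ 2 ≤ c) :
    c * ∑ i, B (b i) (b i) - β * B p p ≤ M * (c * Fintype.card ι - β * ‖p‖ ^ 2) := by
  set H := B - M • innerₗ E
  have hH : ∀ v, H v v = B v v - M * ‖v‖ ^ 2 := fun v => by simp [H]
  have hH0 : ∀ v, H v v ≤ 0 := fun v => by linarith [hH v, hB v]
  have htr : ∑ i, H (b i) (b i) = ∑ i, B (b i) (b i) - M * Fintype.card ι := by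
    simp [hH, Finset.sum_sub_distrib, b.orthonormal.1, mul_comm]
  have hkey := b.norm_sq_mul_sum_apply_le hH0 p
  have htr0 : ∑ i, H (b i) (b i) ≤ 0 := Finset.sum_nonpos fun i _ => hH0 (b i)
  rw [htr, hH] at hkey
  rw [htr] at htr0
  nlinarith

end LinearAlgebra

theorem IsLocalMax.nonpos_of_hasDerivAt_of_hasDerivAt {φ φ' : ℝ → ℝ} {t₀ q : ℝ}
    (h : IsLocalMax φ t₀) (hφ : ∀ᶠ t in 𝓝 t₀, HasDerivAt φ (φ' t) t)
    (hφ' : HasDerivAt φ' q t₀) : q ≤ 0 := by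
  have hderiv : deriv φ =ᶠ[𝓝 t₀] φ' := hφ.mono fun t ht => ht.deriv
  by_contra! hq
  have hmin : IsLocalMin φ t₀ :=
    isLocalMin_of_deriv_deriv_pos (by rwa [hderiv.deriv_eq, hφ'.deriv]) h.deriv_eq_zero
      hφ.self_of_nhds.continuousAt
  have hconst : φ =ᶠ[𝓝 t₀] fun _ => φ t₀ :=
    (h.and hmin).mono fun t ht => le_antisymm ht.1 ht.2
  have : q = 0 := by
    rw [← hφ'.deriv, ← hderiv.deriv_eq, hconst.deriv.deriv_eq]
    simp
  exact hq.ne' this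

theorem tendsto_log_one_add_norm_sq_cocompact {E : Type*} [NormedAddCommGroup E] [ProperSpace E] :
    Tendsto (fun y : E => Real.log (1 + ‖y‖ ^ 2)) (cocompact E) atTop :=
  Real.tendsto_log_atTop.comp <| tendsto_atTop_add_const_left _ 1 <|
    (tendsto_pow_atTop two_ne_zero).comp tendsto_norm_cocompact_atTop

theorem exists_forall_sub_log_le {E : Type*} [NormedAddCommGroup E] [ProperSpace E] {u : E → ℝ}
    {ε : ℝ} (hu : Continuous u) (hbdd : BddAbove (Set.range u)) (hε : 0 < ε) :
    ∃ x, ∀ y, u y - ε * Real.log (1 + ‖y‖ ^ 2) ≤ u x - ε * Real.log (1 + ‖x‖ ^ 2) := by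
  obtain ⟨C, hC⟩ := hbdd
  refine Continuous.exists_forall_ge (by fun_prop (disch := intro; positivity)) ?_
  simp_rw [sub_eq_add_neg]
  exact tendsto_atBot_add_left_of_ge _ C (fun y => hC ⟨y, rfl⟩)
    (tendsto_neg_atTop_atBot.comp (tendsto_log_one_add_norm_sq_cocompact.const_mul_atTop hε))

section Penalization

variable {E : Type*} [NormedAddCommGroup E] [InnerProductSpace ℝ E] {u : E → ℝ} {ε : ℝ} {x : E}

theorem hasFDerivAt_log_one_add_norm_sq (x : E) :
    HasFDerivAt (fun y : E => Real.log (1 + ‖y‖ ^ 2)) ((2 / (1 + ‖x‖ ^ 2)) • innerSL ℝ x) x := by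
  refine (((hasFDerivAt_id x).norm_sq.const_add 1).log (by positivity)).congr_fderiv ?_
  ext v
  simp only [id, smul_apply, ContinuousLinearMap.comp_id, smul_eq_mul, nsmul_eq_mul]
  ring

theorem norm_fderiv_le_of_isLocalMax_sub_log (hu : DifferentiableAt ℝ u x) (hε : 0 ≤ ε)
    (hmax : IsLocalMax (fun y => u y - ε * Real.log (1 + ‖y‖ ^ 2)) x) :
    ‖fderiv ℝ u x‖ ≤ ε := by
  have hcrit := hmax.hasFDerivAt_eq_zero
    (hu.hasFDerivAt.sub ((hasFDerivAt_log_one_add_norm_sq x).const_mul ε))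
  rw [sub_eq_zero.1 hcrit, norm_smul, norm_smul, innerSL_apply_norm, Real.norm_of_nonneg hε,
    Real.norm_of_nonneg (by positivity), div_mul_eq_mul_div]
  have : 2 * ‖x‖ / (1 + ‖x‖ ^ 2) ≤ 1 :=
    (div_le_one (by positivity)).2 (by nlinarith [sq_nonneg (‖x‖ - 1)])
  exact mul_le_of_le_one_right hε this

theorem fderiv_fderiv_apply_le_of_isLocalMax_sub_log (hu : ContDiff ℝ 2 u) (hε : 0 ≤ ε)
    (hmax : IsLocalMax (fun y => u y - ε * Real.log (1 + ‖y‖ ^ 2)) x) (v : E) :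
    fderiv ℝ (fderiv ℝ u) x v v ≤ 2 * ε * ‖v‖ ^ 2 / (1 + ‖x‖ ^ 2) := by
  have hline : ∀ t : ℝ, HasDerivAt (fun s : ℝ => x + s • v) v t := fun t => by
    simpa using ((hasDerivAt_id t).smul_const v).const_add x
  have hpos : ∀ t : ℝ, 1 + ‖x + t • v‖ ^ 2 ≠ 0 := fun t => by positivity
  have hφ : ∀ t : ℝ, HasDerivAt (fun s => u (x + s • v) - ε * Real.log (1 + ‖x + s • v‖ ^ 2))
      (fderiv ℝ u (x + t • v) v - ε * (2 * ⟪x + t • v, v⟫ / (1 + ‖x + t • v‖ ^ 2))) t :=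
    fun t => (((hu.differentiable two_ne_zero _).hasFDerivAt.comp_hasDerivAt t (hline t)).sub
      ((((hline t).norm_sq.const_add 1).log (hpos t)).const_mul ε)).congr_deriv (by ring)
  have hφ' : HasDerivAt
      (fun t : ℝ => fderiv ℝ u (x + t • v) v
        - ε * (2 * ⟪x + t • v, v⟫ / (1 + ‖x + t • v‖ ^ 2)))
      (fderiv ℝ (fderiv ℝ u) x v v - ε * ((2 * ‖v‖ ^ 2 * (1 + ‖x‖ ^ 2)
        - 2 * ⟪x, v⟫ * (2 * ⟪x, v⟫)) / (1 + ‖x‖ ^ 2) ^ 2)) 0 := by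
    have hD2 : HasFDerivAt (fderiv ℝ u) (fderiv ℝ (fderiv ℝ u) x) (x + (0 : ℝ) • v) := by
      rw [zero_smul, add_zero]
      exact ((hu.fderiv_right (m := 1) le_rfl).differentiable one_ne_zero x).hasFDerivAt
    have hfirst := (ContinuousLinearMap.apply ℝ ℝ v).hasFDerivAt.comp_hasDerivAt 0
      (hD2.comp_hasDerivAt 0 (hline 0))
    have hnum := ((hline 0).inner ℝ (hasDerivAt_const (0 : ℝ) v)).const_mul 2
    have hden := (hline 0).norm_sq.const_add 1
    exact (hfirst.sub ((hnum.div hden (hpos 0)).const_mul ε)).congr_deriv (by simp)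
  have hmax' : IsLocalMax (fun y => u y - ε * Real.log (1 + ‖y‖ ^ 2)) (x + (0 : ℝ) • v) := by
    rwa [zero_smul, add_zero]
  have hq := (IsLocalMax.comp_continuous (g := fun s : ℝ => x + s • v) (b := 0) hmax'
    (hline 0).continuousAt).nonpos_of_hasDerivAt_of_hasDerivAt (Eventually.of_forall hφ) hφ'
  have hc : 0 < 1 + ‖x‖ ^ 2 := by positivity
  have hbound : (2 * ‖v‖ ^ 2 * (1 + ‖x‖ ^ 2) - 2 * ⟪x, v⟫ * (2 * ⟪x, v⟫))
      / (1 + ‖x‖ ^ 2) ^ 2 ≤ 2 * ‖v‖ ^ 2 / (1 + ‖x‖ ^ 2) := by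
    rw [div_le_div_iff₀ (by positivity) hc]
    nlinarith [sq_nonneg ⟪x, v⟫]
  calc fderiv ℝ (fderiv ℝ u) x v v
      ≤ ε * ((2 * ‖v‖ ^ 2 * (1 + ‖x‖ ^ 2) - 2 * ⟪x, v⟫ * (2 * ⟪x, v⟫))
        / (1 + ‖x‖ ^ 2) ^ 2) := by linarith
    _ ≤ ε * (2 * ‖v‖ ^ 2 / (1 + ‖x‖ ^ 2)) := mul_le_mul_of_nonneg_left hbound hε
    _ = 2 * ε * ‖v‖ ^ 2 / (1 + ‖x‖ ^ 2) := by ring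

end Penalization

section Gradient

variable {E : Type*} [NormedAddCommGroup E] [InnerProductSpace ℝ E] [CompleteSpace E]
  {ι : Type*} [Fintype ι] (b : OrthonormalBasis ι ℝ E) {u : E → ℝ} {x : E}

theorem OrthonormalBasis.gradient_eq_sum (u : E → ℝ) (y : E) :
    gradient u y = ∑ i, fderiv ℝ u y (b i) • b i := by
  conv_lhs => rw [← b.sum_repr' (gradient u y)]
  refine Finset.sum_congr rfl fun i _ => ?_
  rw [real_inner_comm, gradient, InnerProductSpace.toDual_symm_apply]

theorem OrthonormalBasis.hasFDerivAt_gradient {D : E →L[ℝ] E →L[ℝ] ℝ}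
    (hD : HasFDerivAt (fderiv ℝ u) D x) :
    HasFDerivAt (gradient u)
      (∑ i, ((ContinuousLinearMap.apply ℝ ℝ (b i)).comp D).smulRight (b i)) x := by
  rw [show gradient u = fun y => ∑ i, fderiv ℝ u y (b i) • b i from funext (b.gradient_eq_sum u)]
  exact HasFDerivAt.fun_sum fun i _ =>
    ((ContinuousLinearMap.apply ℝ ℝ (b i)).hasFDerivAt.comp x hD).smul_const (b i)

end Gradient

theorem hasFDerivAt_inv_one_add_norm_sq_rpow_smul {E : Type*} [NormedAddCommGroup E]
    [InnerProductSpace ℝ E] (α : ℝ) (p : E) :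
    HasFDerivAt (fun v : E => ((1 + ‖v‖ ^ 2) ^ α)⁻¹ • v)
      ((1 + ‖p‖ ^ 2) ^ (-α) • ContinuousLinearMap.id ℝ E
        + ((-2 * α * (1 + ‖p‖ ^ 2) ^ (-α - 1)) • innerSL ℝ p).smulRight p) p := by
  have hpos : ∀ v : E, 0 < 1 + ‖v‖ ^ 2 := fun v => by positivity
  have hc := ((hasFDerivAt_id p).norm_sq.const_add 1).rpow_const (p := -α) (Or.inl (hpos p).ne')
  simp only [← Real.rpow_neg (hpos _).le]
  refine (hc.smul (hasFDerivAt_id p)).congr_fderiv ?_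
  ext w
  simp only [id_eq, ContinuousLinearMap.comp_id, add_apply, smul_apply,
    ContinuousLinearMap.id_apply, ContinuousLinearMap.smulRight_apply, coe_innerSL_apply, nsmul_eq_mul, smul_eq_mul]
  module

section MeanCurvature

variable {m : ℕ} {α : ℝ} {u : EuclideanSpace ℝ (Fin m) → ℝ} {x : EuclideanSpace ℝ (Fin m)}

theorem euclideanDiv_eq_sum_of_hasFDerivAt
    {X : EuclideanSpace ℝ (Fin m) → EuclideanSpace ℝ (Fin m)}
    {X' : EuclideanSpace ℝ (Fin m) →L[ℝ] EuclideanSpace ℝ (Fin m)} (hX : HasFDerivAt X X' x) :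
    euclideanDiv X x = ∑ i, X' (EuclideanSpace.basisFun (Fin m) ℝ i) i := by
  refine Finset.sum_congr rfl fun i _ => ?_
  have hXi : HasFDerivAt (fun y => X y i) ((EuclideanSpace.proj (𝕜 := ℝ) i).comp X') x :=
    (EuclideanSpace.proj (𝕜 := ℝ) i).hasFDerivAt.comp x hX
  rw [hXi.fderiv, EuclideanSpace.basisFun_apply]
  rfl

theorem meanCurvatureOp_eq {D : EuclideanSpace ℝ (Fin m) →L[ℝ] EuclideanSpace ℝ (Fin m) →L[ℝ] ℝ}
    (hD : HasFDerivAt (fderiv ℝ u) D x) :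
    meanCurvatureOp α u x = (1 + ‖gradient u x‖ ^ 2) ^ (-α)
        * ∑ i, D (EuclideanSpace.basisFun (Fin m) ℝ i) (EuclideanSpace.basisFun (Fin m) ℝ i)
      - 2 * α * (1 + ‖gradient u x‖ ^ 2) ^ (-α - 1) * D (gradient u x) (gradient u x) := by
  set e := EuclideanSpace.basisFun (Fin m) ℝ
  set p := gradient u x
  have hX := (hasFDerivAt_inv_one_add_norm_sq_rpow_smul α p).comp x (e.hasFDerivAt_gradient hD)
  have hcoord : ∀ i (v : EuclideanSpace ℝ (Fin m)), v i = ⟪e i, v⟫ := fun i v => by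
    rw [EuclideanSpace.basisFun_apply, EuclideanSpace.inner_single_left]
    simp
  have hG : ∀ w, (∑ i, ((ContinuousLinearMap.apply ℝ ℝ (e i)).comp D).smulRight (e i)) w
      = ∑ i, D w (e i) • e i := fun w => by simp
  have hpp := e.sum_inner_mul_apply ((ContinuousLinearMap.apply ℝ ℝ p).comp D) p
  simp only [ContinuousLinearMap.comp_apply, ContinuousLinearMap.apply_apply] at hpp
  rw [meanCurvatureOp, euclideanDiv_eq_sum_of_hasFDerivAt
    (X := fun y => ((1 + ‖gradient u y‖ ^ 2) ^ α)⁻¹ • gradient u y) hX]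
  calc _ = ∑ i, ((1 + ‖p‖ ^ 2) ^ (-α) * D (e i) (e i)
          - 2 * α * (1 + ‖p‖ ^ 2) ^ (-α - 1) * (⟪e i, p⟫ * D (e i) p)) := by
        refine Finset.sum_congr rfl fun i _ => ?_
        rw [hcoord]
        simp only [ContinuousLinearMap.comp_apply, add_apply, smul_apply,
          ContinuousLinearMap.id_apply, ContinuousLinearMap.smulRight_apply, innerSL_apply_apply,
          hG, inner_add_right, inner_smul_right, e.inner_sum_apply_smul, smul_eq_mul]
        ring
    _ = _ := by rw [Finset.sum_sub_distrib, ← Finset.mul_sum, ← Finset.mul_sum, hpp]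

theorem meanCurvatureOp_le_of_isLocalMax_sub_log (hα : 0 < α) (hu : ContDiff ℝ 2 u) {ε : ℝ}
    (hε : 0 ≤ ε) (hεα : 2 * α * ε ^ 2 ≤ 1)
    (hmax : IsLocalMax (fun y => u y - ε * Real.log (1 + ‖y‖ ^ 2)) x) :
    meanCurvatureOp α u x ≤ 2 * m * ε / (1 + ‖x‖ ^ 2) := by
  set D := fderiv ℝ (fderiv ℝ u) x
  have hD : HasFDerivAt (fderiv ℝ u) D x :=
    ((hu.fderiv_right (m := 1) le_rfl).differentiable one_ne_zero x).hasFDerivAt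
  set N := ‖gradient u x‖ ^ 2
  have hN : N ≤ ε ^ 2 := by
    have hgrad : ‖gradient u x‖ ≤ ε := by
      rw [gradient, LinearIsometryEquiv.norm_map]
      exact norm_fderiv_le_of_isLocalMax_sub_log (hu.differentiable two_ne_zero x) hε hmax
    exact pow_le_pow_left₀ (norm_nonneg _) hgrad 2
  have hN0 : 0 ≤ N := by positivity
  set c := (1 + N) ^ (-α)
  set β := 2 * α * (1 + N) ^ (-α - 1)
  set M := 2 * ε / (1 + ‖x‖ ^ 2)
  have hc1 : c ≤ 1 := Real.rpow_le_one_of_one_le_of_nonpos (by linarith) (by linarith)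
  have hβ : 0 ≤ β := by positivity
  have hβc : β * N ≤ c := by
    have hsplit : β * N = c * (2 * α * N / (1 + N)) := by
      simp only [β, c]
      rw [Real.rpow_sub (by positivity), Real.rpow_one]
      ring
    rw [hsplit]
    refine mul_le_of_le_one_right (by positivity) ((div_le_one (by positivity)).2 ?_)
    nlinarith
  have hB : ∀ v, D.toLinearMap₁₂ v v ≤ M * ‖v‖ ^ 2 := fun v => by
    rw [ContinuousLinearMap.toLinearMap₁₂_apply_apply_apply, div_mul_eq_mul_div]
    exact fderiv_fderiv_apply_le_of_isLocalMax_sub_log hu hε hmax v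
  have htrace := (EuclideanSpace.basisFun (Fin m) ℝ).mul_sum_apply_sub_mul_apply_le hB
    (gradient u x) hβ hβc
  simp only [ContinuousLinearMap.toLinearMap₁₂_apply_apply_apply, Fintype.card_fin] at htrace
  rw [meanCurvatureOp_eq hD]
  calc _ ≤ M * (c * m - β * N) := htrace
    _ ≤ M * m := by gcongr; nlinarith
    _ = 2 * m * ε / (1 + ‖x‖ ^ 2) := by ring

theorem exists_lt_and_meanCurvatureOp_mul_le (hα : 0 < α) (hu : ContDiff ℝ 2 u)
    (hbdd : BddAbove (Set.range u)) {θ : ℝ} (hθ : θ < ⨆ x, u x) {η : ℝ} (hη : 0 < η) :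
    ∃ x, θ < u x ∧ meanCurvatureOp α u x * (1 + ‖x‖ ^ 2) ≤ η := by
  obtain ⟨w, hw⟩ := exists_lt_of_lt_ciSup hθ
  have hsmall : ∀ {F : ℝ → ℝ}, Continuous F → F 0 = 0 → ∀ {a : ℝ}, 0 < a →
      ∀ᶠ ε in 𝓝 (0 : ℝ), F ε < a :=
    fun hF hF0 _ ha => (hF.tendsto' 0 0 hF0).eventually (eventually_lt_nhds ha)
  obtain ⟨ε, hε, hεα, hεw, hεη⟩ : ∃ ε > 0, 2 * α * ε ^ 2 < 1 ∧
      ε * Real.log (1 + ‖w‖ ^ 2) < u w - θ ∧ 2 * m * ε < η :=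
    ((eventually_mem_nhdsWithin (s := Set.Ioi 0) (a := 0)).and (nhdsWithin_le_nhds
      ((hsmall (by fun_prop) (by simp) one_pos).and ((hsmall (by fun_prop) (by simp)
        (sub_pos.2 hw)).and (hsmall (by fun_prop) (by simp) hη))))).exists
  obtain ⟨x, hx⟩ := exists_forall_sub_log_le hu.continuous hbdd hε
  refine ⟨x, ?_, ?_⟩
  · have : 0 ≤ ε * Real.log (1 + ‖x‖ ^ 2) :=
      mul_nonneg hε.le (Real.log_nonneg (by nlinarith [norm_nonneg x]))
    linarith [hx w]
  · have hmc := meanCurvatureOp_le_of_isLocalMax_sub_log hα hu hε.le hεα.le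
      (Eventually.of_forall hx)
    calc _ ≤ 2 * m * ε / (1 + ‖x‖ ^ 2) * (1 + ‖x‖ ^ 2) := by gcongr
      _ = 2 * m * ε := div_mul_cancel₀ _ (by positivity)
      _ ≤ η := hεη.le

end MeanCurvature

theorem exists_pos_mul_le_one_add_sq {Q : ℝ → ℝ} (hQpos : ∀ t > (0 : ℝ), 0 < Q t)
    (hQmono : ∀ s t : ℝ, 0 < s → s ≤ t → Q s ≤ Q t) (hQ : Q =O[atTop] fun t => t ^ 2) :
    ∃ c > 0, ∀ r > 0, c * Q r ≤ 1 + r ^ 2 := by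
  obtain ⟨C, hC, hCQ⟩ := hQ.exists_pos
  obtain ⟨R, hR⟩ := eventually_atTop.1 hCQ.bound
  have hQR : 0 < Q (max R 1) := hQpos _ (by positivity)
  refine ⟨min C⁻¹ (Q (max R 1))⁻¹, by positivity, fun r hr => ?_⟩
  rcases le_total r (max R 1) with h | h
  · calc min C⁻¹ (Q (max R 1))⁻¹ * Q r ≤ (Q (max R 1))⁻¹ * Q (max R 1) :=
          mul_le_mul (min_le_right _ _) (hQmono r _ hr h) (hQpos r hr).le (by positivity)
      _ = 1 := inv_mul_cancel₀ hQR.ne'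
      _ ≤ 1 + r ^ 2 := by nlinarith
  · have hQr := hR r ((le_max_left R 1).trans h)
    rw [Real.norm_of_nonneg (hQpos r hr).le, Real.norm_of_nonneg (sq_nonneg r)] at hQr
    calc min C⁻¹ (Q (max R 1))⁻¹ * Q r ≤ C⁻¹ * (C * r ^ 2) :=
          mul_le_mul (min_le_left _ _) hQr (hQpos r hr).le (by positivity)
      _ = r ^ 2 := by field_simp
      _ ≤ 1 + r ^ 2 := by linarith

theorem div_one_add_norm_sq_le_of_continuous {E : Type*} [NormedAddCommGroup E]
    [NormedSpace ℝ E] [Nontrivial E] {Q : ℝ → ℝ} {b : E → ℝ} {c : ℝ}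
    (hQpos : ∀ t > (0 : ℝ), 0 < Q t) (hcQ : ∀ r > 0, c * Q r ≤ 1 + r ^ 2) (hb : Continuous b)
    (hbQ : ∀ x : E, 0 < ‖x‖ → 1 / Q ‖x‖ ≤ b x) (x : E) : c / (1 + ‖x‖ ^ 2) ≤ b x := by
  have hclosed : IsClosed {x : E | c / (1 + ‖x‖ ^ 2) ≤ b x} :=
    isClosed_le (continuous_const.div (by fun_prop) fun y => by positivity) hb
  have hsub : {(0 : E)}ᶜ ⊆ {x : E | c / (1 + ‖x‖ ^ 2) ≤ b x} := fun y hy => by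
    have hy0 : 0 < ‖y‖ := norm_pos_iff.2 hy
    calc c / (1 + ‖y‖ ^ 2) ≤ 1 / Q ‖y‖ := by
          rw [div_le_div_iff₀ (by positivity) (hQpos _ hy0)]
          linarith [hcQ _ hy0]
      _ ≤ b y := hbQ y hy0
  have hall := hclosed.closure_subset_iff.2 hsub
  rw [(dense_compl_singleton (0 : E)).closure_eq] at hall
  exact hall (Set.mem_univ x)

theorem stmt5_general {m : ℕ} (hm : 2 ≤ m) (α : ℝ) (hα : 0 < α)
    (Q : ℝ → ℝ)
    (hQpos : ∀ t > (0:ℝ), 0 < Q t)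
    (hQmono : ∀ s t : ℝ, 0 < s → s ≤ t → Q s ≤ Q t)
    (hQo : Q =o[atTop] fun t => t ^ 2)
    (b : EuclideanSpace ℝ (Fin m) → ℝ) (hb : Continuous b)
    (hbQ : ∀ x : EuclideanSpace ℝ (Fin m), 0 < ‖x‖ → 1 / Q ‖x‖ ≤ b x)
    (f : ℝ → ℝ) (hf : Continuous f)
    (u : EuclideanSpace ℝ (Fin m) → ℝ) (hu : ContDiff ℝ 2 u)
    (hbdd : BddAbove (Set.range u))
    (γ : ℝ) (hγ : γ < ⨆ x, u x)
    (hineq : ∀ x : EuclideanSpace ℝ (Fin m), γ < u x →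
      b x * f (u x) ≤ meanCurvatureOp α u x) :
    f (⨆ x, u x) ≤ 0 := by
  by_contra! hpos
  set s := ⨆ x, u x
  have : Nonempty (Fin m) := ⟨⟨0, by omega⟩⟩
  obtain ⟨c, hc, hcQ⟩ := exists_pos_mul_le_one_add_sq hQpos hQmono hQo.isBigO
  obtain ⟨l, hls, hl⟩ := mem_nhdsLE_iff_exists_Ioc_subset.1 <| nhdsWithin_le_nhds <|
    (hf.tendsto s).eventually (eventually_gt_nhds (half_lt_self hpos))
  obtain ⟨x, hux, hx⟩ := exists_lt_and_meanCurvatureOp_mul_le hα hu hbdd (max_lt hγ hls)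
    (η := c * (f s / 2) / 2) (by positivity)
  have hfx : f s / 2 < f (u x) := hl ⟨(le_max_right _ _).trans_lt hux, le_ciSup hbdd x⟩
  have hbx := div_one_add_norm_sq_le_of_continuous hQpos hcQ hb hbQ x
  have hlower : c * (f s / 2) ≤ meanCurvatureOp α u x * (1 + ‖x‖ ^ 2) := by
    calc c * (f s / 2) = c / (1 + ‖x‖ ^ 2) * (f s / 2) * (1 + ‖x‖ ^ 2) := by field_simp
      _ ≤ b x * f (u x) * (1 + ‖x‖ ^ 2) := by gcongr; exact hbx.trans' (by positivity)
      _ ≤ _ := by gcongr; exact hineq x ((le_max_left _ _).trans_lt hux)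
  have : 0 < c * (f s / 2) := by positivity
  linarith

theorem stmt5 {m : ℕ} (hm : 2 ≤ m) (α : ℝ) (hα : 0 < α)
    (Q : ℝ → ℝ)
    (hQpos : ∀ t > (0:ℝ), 0 < Q t)
    (hQmono : ∀ s t : ℝ, 0 < s → s ≤ t → Q s ≤ Q t)
    (hQo : Q =o[atTop] fun t => t ^ 2)
    (hliminf : ∃ C : ℝ, ∃ᶠ r in atTop, Q r * Real.log r / r ^ 2 ≤ C)
    (b : EuclideanSpace ℝ (Fin m) → ℝ) (hb : Continuous b)
    (hbQ : ∀ x : EuclideanSpace ℝ (Fin m), 0 < ‖x‖ → 1 / Q ‖x‖ ≤ b x)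
    (f : ℝ → ℝ) (hf : Continuous f)
    (u : EuclideanSpace ℝ (Fin m) → ℝ) (hu : ContDiff ℝ 2 u)
    (hbdd : BddAbove (Set.range u))
    (γ : ℝ) (hγ : γ < ⨆ x, u x)
    (hineq : ∀ x : EuclideanSpace ℝ (Fin m), γ < u x →
      b x * f (u x) ≤ meanCurvatureOp α u x) :
    f (⨆ x, u x) ≤ 0 :=
  stmt5_general hm α hα Q hQpos hQmono hQo b hb hbQ f hf u hu hbdd γ hγ hineq
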